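/- arXiv:quant-ph/0410063 — 2 statements merged into one kernel-verified Lean document; each statement's English description precedes it below -/
import Mathlib

section
/- The maximal p-norm of the Werner–Holevo channel Φ_d equals ν_p(Φ_d) = (d−1)^{(1−p)/p} for all p ≥ 1 and d ≥ 2. -/
open ComplexOrder

/-- The Schatten `p`-norm of a Hermitian matrix, `(∑ |eigenvalues|^p)^(1/p)`
(defined to be `0` on non-Hermitian matrices). -/
noncomputable def schattenNorm (p : ℝ) {n : Type*} [Fintype n] [DecidableEq n]
    (A : Matrix n n ℂ) : ℝ :=
  if h : A.IsHermitian then (∑ i, |h.eigenvalues i| ^ p) ^ (1 / p) else 0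

/-- The maximal `p`-norm of a channel: the supremum of `‖Φ(ρ)‖_p` over density matrices. -/
noncomputable def maxPNorm (p : ℝ) {ι : Type*} [Fintype ι] [DecidableEq ι]
    (Φ : Matrix ι ι ℂ → Matrix ι ι ℂ) : ℝ :=
  sSup {x | ∃ ρ : Matrix ι ι ℂ, ρ.PosSemidef ∧ ρ.trace = 1 ∧ x = schattenNorm p (Φ ρ)}

/-- The Werner–Holevo map `Φ_d(μ) = (1/(d-1)) (I·Tr(μ) − μ^T)` on `d × d` complex matrices. -/
noncomputable def WernerHolevo (d : ℕ) (μ : Matrix (Fin d) (Fin d) ℂ) :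
    Matrix (Fin d) (Fin d) ℂ :=
  (1 / ((d : ℂ) - 1)) • (μ.trace • (1 : Matrix (Fin d) (Fin d) ℂ) - μ.transpose)

/-! For a density matrix `ρ`, `Φ_d(ρ) = (I - ρᵀ)/(d - 1)`, so the eigenvalues of `Φ_d(ρ)` are
`(1 - μ)/(d - 1)` for the eigenvalues `μ ∈ [0, 1]` of `ρᵀ`: they lie in `[0, c]` with
`c = 1/(d - 1)` and sum to `1`. Hence `∑ λᵢ ^ p ≤ c ^ (p - 1) ∑ λᵢ = c ^ (p - 1)`, with equality
when every `λᵢ` is `0` or `c`, which is the case when `ρ` is a projection (a pure state). -/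

open Matrix

theorem Real.rpow_le_rpow_sub_one_mul {x c p : ℝ} (hx : 0 ≤ x) (hxc : x ≤ c) (hp : 1 ≤ p) :
    x ^ p ≤ c ^ (p - 1) * x := by
  rcases hx.eq_or_lt with rfl | hx
  · simp [Real.zero_rpow (by linarith : p ≠ 0)]
  calc x ^ p = x ^ (p - 1) * x := by rw [Real.rpow_sub_one hx.ne', div_mul_cancel₀ _ hx.ne']
    _ ≤ c ^ (p - 1) * x := by gcongr

theorem Real.inv_rpow_sub_one_rpow_one_div {x : ℝ} (hx : 0 ≤ x) (p : ℝ) :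
    (x⁻¹ ^ (p - 1)) ^ (1 / p) = x ^ ((1 - p) / p) := by
  rw [Real.inv_rpow hx, ← Real.rpow_neg hx, neg_sub, ← Real.rpow_mul hx, mul_one_div]

section

variable {n : Type*} [Fintype n] [DecidableEq n]

theorem Matrix.PosSemidef.spectrum_subset_Icc_trace {𝕜 : Type*} [RCLike 𝕜] {B : Matrix n n 𝕜}
    (hB : B.PosSemidef) : spectrum ℝ B ⊆ Set.Icc 0 (RCLike.re B.trace) := by
  rw [hB.1.spectrum_real_eq_range_eigenvalues]
  rintro _ ⟨i, rfl⟩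
  refine ⟨hB.eigenvalues_nonneg i, ?_⟩
  rw [hB.1.trace_eq_sum_eigenvalues, map_sum]
  simp only [RCLike.ofReal_re]
  exact Finset.single_le_sum (fun j _ => hB.eigenvalues_nonneg j) (Finset.mem_univ i)

theorem Matrix.IsHermitian.sum_eigenvalues_eq_one {A : Matrix n n ℂ} (hA : A.IsHermitian)
    (htr : A.trace = 1) : ∑ i, hA.eigenvalues i = 1 := by
  have h := hA.trace_eq_sum_eigenvalues
  rw [htr] at h
  rw [← Complex.ofReal_inj]
  push_cast
  exact h.symm

theorem schattenNorm_of_isHermitian (p : ℝ) {A : Matrix n n ℂ} (hA : A.IsHermitian) :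
    schattenNorm p A = (∑ i, |hA.eigenvalues i| ^ p) ^ (1 / p) :=
  dif_pos hA

theorem schattenNorm_le_of_spectrum_subset_Icc {A : Matrix n n ℂ} (hA : A.IsHermitian)
    (htr : A.trace = 1) {c p : ℝ} (hp : 1 ≤ p) (hσ : spectrum ℝ A ⊆ Set.Icc 0 c) :
    schattenNorm p A ≤ (c ^ (p - 1)) ^ (1 / p) := by
  have hev i := hσ (hA.eigenvalues_mem_spectrum_real i)
  rw [schattenNorm_of_isHermitian p hA]
  gcongr
  calc ∑ i, |hA.eigenvalues i| ^ p ≤ ∑ i, c ^ (p - 1) * hA.eigenvalues i :=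
        Finset.sum_le_sum fun i _ => by
          rw [abs_of_nonneg (hev i).1]
          exact Real.rpow_le_rpow_sub_one_mul (hev i).1 (hev i).2 hp
    _ = c ^ (p - 1) := by rw [← Finset.mul_sum, hA.sum_eigenvalues_eq_one htr, mul_one]

theorem schattenNorm_eq_of_spectrum_subset_pair {A : Matrix n n ℂ} (hA : A.IsHermitian)
    (htr : A.trace = 1) {c p : ℝ} (hc : 0 < c) (hp : 0 < p) (hσ : spectrum ℝ A ⊆ {0, c}) :
    schattenNorm p A = (c ^ (p - 1)) ^ (1 / p) := by
  have hev (i : n) : |hA.eigenvalues i| ^ p = c ^ (p - 1) * hA.eigenvalues i := by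
    rcases hσ (hA.eigenvalues_mem_spectrum_real i) with h | h <;> rw [h]
    · simp [Real.zero_rpow hp.ne']
    · rw [abs_of_pos hc, Real.rpow_sub_one hc.ne', div_mul_cancel₀ _ hc.ne']
  rw [schattenNorm_of_isHermitian p hA, Finset.sum_congr rfl fun i _ => hev i, ← Finset.mul_sum,
    hA.sum_eigenvalues_eq_one htr, mul_one]

end

section

variable {d : ℕ} {p : ℝ} {ρ : Matrix (Fin d) (Fin d) ℂ}

theorem trace_wernerHolevo (hd : d ≠ 1) (μ : Matrix (Fin d) (Fin d) ℂ) :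
    (WernerHolevo d μ).trace = μ.trace := by
  have : (d : ℂ) - 1 ≠ 0 := sub_ne_zero.mpr (by exact_mod_cast hd)
  rw [WernerHolevo, trace_smul, trace_sub, trace_smul, trace_one, trace_transpose,
    Fintype.card_fin, smul_eq_mul, smul_eq_mul, ← mul_sub_one, one_div,
    inv_mul_eq_iff_eq_mul₀ this, mul_comm]

theorem wernerHolevo_eq_smul (htr : ρ.trace = 1) :
    WernerHolevo d ρ = ((d : ℝ) - 1)⁻¹ • (1 - ρᵀ) := by
  rw [WernerHolevo, htr, one_smul, one_div, ← Complex.coe_smul]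
  push_cast
  rfl

theorem isHermitian_wernerHolevo (hρ : ρ.IsHermitian) (htr : ρ.trace = 1) :
    (WernerHolevo d ρ).IsHermitian := by
  rw [wernerHolevo_eq_smul htr]
  exact (isHermitian_one.sub hρ.transpose).smul (IsSelfAdjoint.all _)

theorem spectrum_wernerHolevo (hd : d ≠ 1) (htr : ρ.trace = 1) :
    spectrum ℝ (WernerHolevo d ρ) = (fun μ => ((d : ℝ) - 1)⁻¹ * (1 - μ)) '' spectrum ℝ ρᵀ := by
  have hc : ((d : ℝ) - 1)⁻¹ ≠ 0 := inv_ne_zero (sub_ne_zero.mpr (by exact_mod_cast hd))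
  rw [wernerHolevo_eq_smul htr, ← Units.val_mk0 hc, ← Units.smul_def, spectrum.unit_smul_eq_smul,
    ← map_one (algebraMap ℝ (Matrix (Fin d) (Fin d) ℂ)), ← spectrum.singleton_sub_eq,
    Set.singleton_sub, ← Set.image_smul, Set.image_image]
  rfl

theorem schattenNorm_wernerHolevo_le (hd : 2 ≤ d) (hp : 1 ≤ p) (hρ : ρ.PosSemidef)
    (htr : ρ.trace = 1) : schattenNorm p (WernerHolevo d ρ) ≤ ((d : ℝ) - 1) ^ ((1 - p) / p) := by
  have hc : 0 ≤ ((d : ℝ) - 1)⁻¹ := inv_nonneg.mpr (by simp; omega)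
  rw [← Real.inv_rpow_sub_one_rpow_one_div (by simp; omega)]
  refine schattenNorm_le_of_spectrum_subset_Icc (isHermitian_wernerHolevo hρ.1 htr)
    ((trace_wernerHolevo (by omega) ρ).trans htr) hp ?_
  rw [spectrum_wernerHolevo (by omega) htr]
  rintro _ ⟨μ, hμ, rfl⟩
  obtain ⟨hμ0, hμ1⟩ := hρ.transpose.spectrum_subset_Icc_trace hμ
  rw [trace_transpose, htr, RCLike.one_re] at hμ1
  exact ⟨mul_nonneg hc (by linarith), mul_le_of_le_one_right hc (by linarith)⟩

theorem schattenNorm_wernerHolevo_of_isIdempotentElem (hd : 2 ≤ d) (hp : 0 < p)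
    (hρ : ρ.IsHermitian) (hproj : IsIdempotentElem ρ) (htr : ρ.trace = 1) :
    schattenNorm p (WernerHolevo d ρ) = ((d : ℝ) - 1) ^ ((1 - p) / p) := by
  have hc : 0 < ((d : ℝ) - 1)⁻¹ := inv_pos.mpr (by simp; omega)
  rw [← Real.inv_rpow_sub_one_rpow_one_div (by simp; omega)]
  refine schattenNorm_eq_of_spectrum_subset_pair (isHermitian_wernerHolevo hρ htr)
    ((trace_wernerHolevo (by omega) ρ).trans htr) hc hp ?_
  have hproj_t : IsIdempotentElem ρᵀ := by
    rw [IsIdempotentElem, ← transpose_mul, hproj.eq]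
  rw [spectrum_wernerHolevo (by omega) htr]
  rintro _ ⟨μ, hμ, rfl⟩
  rcases hproj_t.spectrum_subset ℝ hμ with rfl | rfl <;> simp

end

/-- The maximal `p`-norm of the Werner–Holevo channel equals `(d-1)^((1-p)/p)`
for all `p ≥ 1` and `d ≥ 2`. -/
theorem stmt3 (d : ℕ) (hd : 2 ≤ d) (p : ℝ) (hp : 1 ≤ p) :
    maxPNorm p (WernerHolevo d) = ((d : ℝ) - 1) ^ ((1 - p) / p) := by
  set ρ₀ : Matrix (Fin d) (Fin d) ℂ := diagonal (Pi.single ⟨0, by omega⟩ 1)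
  have hρ₀ : ρ₀.PosSemidef := PosSemidef.diagonal (Pi.single_nonneg.mpr zero_le_one)
  have hproj : IsIdempotentElem ρ₀ := by
    rw [IsIdempotentElem, diagonal_mul_diagonal, ← Pi.mul_def, ← Pi.single_mul, mul_one]
  have htr : ρ₀.trace = 1 := by simp [ρ₀]
  refine IsGreatest.csSup_eq ⟨⟨ρ₀, hρ₀, htr,
    (schattenNorm_wernerHolevo_of_isIdempotentElem hd (by linarith) hρ₀.1 hproj htr).symm⟩, ?_⟩
  rintro _ ⟨ρ, hρ, htr, rfl⟩
  exact schattenNorm_wernerHolevo_le hd hp hρ htr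
end

section
/- (Hermite–Genocchi) For a function g that is (n−1)-times continuously differentiable and distinct points x_1,…,x_n, the divided difference Σ_{j=1}^n g(x_j)/∏_{i≠j}(x_j − x_i) equals the integral of g^{(n−1)}(p_1 x_1 + … + p_n x_n) over the probability simplex {p_i ≥ 0, Σ p_i = 1}. -/
/-!
Induction on `n`. Split the simplex coordinates as `t = (s, u)`, where `s` is the weight
of `x 1`. Along `s` the point moves with speed `x 1 - x 0`, so by the fundamental theorem
of calculus, integrating out `s ∈ [0, 1 - ∑ u]` turns the integral of `g⁽ⁿ⁺¹⁾` into the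
difference of the integrals of `g⁽ⁿ⁾` for the points with `x 0`, resp. `x 1`, removed,
divided by `x 1 - x 0`. Divided differences satisfy the same recurrence.
-/

open MeasureTheory Finset

namespace HermiteGenocchi

section DividedDifference

variable {ι : Type*} [DecidableEq ι]

noncomputable def divDiff (s : Finset ι) (y : ι → ℝ) (g : ℝ → ℝ) : ℝ :=
  ∑ j ∈ s, g (y j) / ∏ i ∈ s.erase j, (y j - y i)

lemma mul_div_prod_erase {s : Finset ι} {y : ι → ℝ} (hy : Set.InjOn y s) (c : ℝ)
    {j a : ι} (hj : j ∈ s) (ha : a ∈ s) (hja : j ≠ a) :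
    (y j - y a) * (c / ∏ i ∈ s.erase j, (y j - y i))
      = c / ∏ i ∈ (s.erase a).erase j, (y j - y i) := by
  have hya : y j - y a ≠ 0 := sub_ne_zero.2 (hy.ne hj ha hja)
  rw [erase_right_comm, ← mul_prod_erase _ _ (mem_erase.2 ⟨hja.symm, ha⟩)]
  field_simp

lemma sum_mul_div_prod_erase {s : Finset ι} {y : ι → ℝ} (hy : Set.InjOn y s)
    (g : ℝ → ℝ) {a : ι} (ha : a ∈ s) :
    ∑ j ∈ s, (y j - y a) * (g (y j) / ∏ i ∈ s.erase j, (y j - y i))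
      = divDiff (s.erase a) y g := by
  rw [← add_sum_erase _ _ ha, sub_self, zero_mul, zero_add, divDiff]
  refine sum_congr rfl fun j hj => ?_
  obtain ⟨hja, hj⟩ := mem_erase.1 hj
  exact mul_div_prod_erase hy _ hj ha hja

lemma divDiff_eq_sub_div {s : Finset ι} {y : ι → ℝ} (hy : Set.InjOn y s) (g : ℝ → ℝ)
    {a b : ι} (ha : a ∈ s) (hb : b ∈ s) (hab : a ≠ b) :
    divDiff s y g = (divDiff (s.erase a) y g - divDiff (s.erase b) y g) / (y b - y a) := by
  have hba : y b - y a ≠ 0 := sub_ne_zero.2 (hy.ne hb ha hab.symm)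
  rw [eq_div_iff hba, ← sum_mul_div_prod_erase hy g ha, ← sum_mul_div_prod_erase hy g hb,
    ← sum_sub_distrib, divDiff, sum_mul]
  refine sum_congr rfl fun j _ => ?_
  ring

lemma divDiff_map {κ : Type*} [DecidableEq κ] (s : Finset κ) (e : κ ↪ ι) (y : ι → ℝ)
    (g : ℝ → ℝ) : divDiff (s.map e) y g = divDiff s (y ∘ e) g := by
  simp only [divDiff, sum_map, ← map_erase, prod_map, Function.comp_apply]

end DividedDifference

lemma _root_.Fin.univ_erase_eq_map_succAboveEmb {n : ℕ} (p : Fin (n + 1)) :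
    univ.erase p = univ.map p.succAboveEmb := by
  ext i; simp [eq_comm (a := i), Fin.exists_succAbove_eq_iff]

lemma divDiff_univ_fin_succ {n : ℕ} {x : Fin (n + 2) → ℝ} (hx : Function.Injective x)
    (g : ℝ → ℝ) :
    divDiff univ x g
      = (divDiff univ (x ∘ Fin.succ) g - divDiff univ (x ∘ (1 : Fin (n + 2)).succAbove) g)
        / (x 1 - x 0) := by
  rw [divDiff_eq_sub_div hx.injOn g (mem_univ 0) (mem_univ 1) Fin.zero_ne_one,
    Fin.univ_erase_eq_map_succAboveEmb, Fin.univ_erase_eq_map_succAboveEmb, divDiff_map,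
    divDiff_map]
  rfl

/-- The probability simplex of `ℝⁿ⁺¹`, parametrised by all weights but the first one. -/
def cornerSimplex (n : ℕ) : Set (Fin n → ℝ) := {t | (∀ i, 0 ≤ t i) ∧ ∑ i, t i ≤ 1}

lemma isClosed_cornerSimplex (n : ℕ) : IsClosed (cornerSimplex n) :=
  isClosed_Ici.inter (isClosed_le (continuous_finsetSum _ fun i _ => continuous_apply i)
    continuous_const)

lemma measurableSet_cornerSimplex (n : ℕ) : MeasurableSet (cornerSimplex n) :=
  (isClosed_cornerSimplex n).measurableSet

lemma isCompact_cornerSimplex (n : ℕ) : IsCompact (cornerSimplex n) := by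
  refine (isCompact_Icc (a := 0) (b := 1)).of_isClosed_subset (isClosed_cornerSimplex n) ?_
  rintro t ⟨h0, h1⟩
  exact ⟨h0, fun i => (single_le_sum (fun j _ => h0 j) (mem_univ i)).trans h1⟩

lemma cons_mem_cornerSimplex_iff {n : ℕ} (s : ℝ) (u : Fin n → ℝ) :
    (Fin.cons s u : Fin (n + 1) → ℝ) ∈ cornerSimplex (n + 1)
      ↔ u ∈ cornerSimplex n ∧ s ∈ Set.Icc 0 (1 - ∑ i, u i) := by
  simp only [cornerSimplex, Set.mem_ofPred_eq, Fin.forall_fin_succ, Fin.cons_zero,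
    Fin.cons_succ, Fin.sum_cons, Set.mem_Icc]
  constructor
  · rintro ⟨⟨hs, hu⟩, hsum⟩
    exact ⟨⟨hu, by linarith⟩, hs, by linarith⟩
  · rintro ⟨⟨hu, -⟩, hs, hsum⟩
    exact ⟨⟨hs, hu⟩, by linarith⟩

lemma setIntegral_cornerSimplex_succ {n : ℕ} {f : (Fin (n + 1) → ℝ) → ℝ}
    (hf : IntegrableOn f (cornerSimplex (n + 1))) :
    ∫ t in cornerSimplex (n + 1), f t
      = ∫ u in cornerSimplex n, ∫ s in Set.Icc 0 (1 - ∑ i, u i), f (Fin.cons s u) := by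
  let e := (MeasurableEquiv.piFinSuccAbove (fun _ : Fin (n + 1) => ℝ) 0).symm
  have he : MeasurePreserving e (volume.prod volume) volume :=
    (volume_preserving_piFinSuccAbove (fun _ : Fin (n + 1) => ℝ) 0).symm _
  have he_apply : ∀ p, e p = Fin.cons p.1 p.2 := fun p => by
    simp [e, MeasurableEquiv.piFinSuccAbove_symm_apply, Fin.insertNthEquiv, Fin.insertNth_zero']
  have hint :
      Integrable (fun p => (cornerSimplex (n + 1)).indicator f (e p)) (volume.prod volume) :=
    he.integrable_comp_of_integrable
      ((integrable_indicator_iff (measurableSet_cornerSimplex _)).2 hf)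
  rw [← integral_indicator (measurableSet_cornerSimplex _), ← he.integral_comp',
    integral_prod_symm _ hint, ← integral_indicator (measurableSet_cornerSimplex n)]
  refine integral_congr_ae (.of_forall fun u => ?_)
  simp only [he_apply]
  by_cases hu : u ∈ cornerSimplex n
  · rw [Set.indicator_of_mem hu, ← integral_indicator measurableSet_Icc]
    congr 1 with s
    by_cases hs : s ∈ Set.Icc 0 (1 - ∑ i, u i)
    · rw [Set.indicator_of_mem hs,
        Set.indicator_of_mem ((cons_mem_cornerSimplex_iff s u).2 ⟨hu, hs⟩)]
    · rw [Set.indicator_of_notMem hs,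
        Set.indicator_of_notMem fun h => hs ((cons_mem_cornerSimplex_iff s u).1 h).2]
  · rw [Set.indicator_of_notMem hu]
    exact integral_eq_zero_of_ae (.of_forall fun s =>
      Set.indicator_of_notMem (fun h => hu ((cons_mem_cornerSimplex_iff s u).1 h).1) _)

lemma intervalIntegral_deriv_comp_mul_add {f : ℝ → ℝ} (hf : Differentiable ℝ f)
    (hf' : Continuous (deriv f)) {d : ℝ} (hd : d ≠ 0) (A c : ℝ) :
    ∫ s in 0..c, deriv f (d * s + A) = (f (d * c + A) - f A) / d := by
  rw [intervalIntegral.integral_comp_mul_add _ hd, mul_zero, zero_add,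
    intervalIntegral.integral_deriv_eq_sub' f rfl (fun x _ => hf x) hf'.continuousOn,
    smul_eq_mul, inv_mul_eq_div]

noncomputable def barycentricPoint {n : ℕ} (x : Fin (n + 1) → ℝ) (t : Fin n → ℝ) : ℝ :=
  (1 - ∑ i, t i) * x 0 + ∑ i, t i * x i.succ

lemma continuous_barycentricPoint {n : ℕ} (x : Fin (n + 1) → ℝ) :
    Continuous (barycentricPoint x) := by
  unfold barycentricPoint; fun_prop

lemma integrableOn_cornerSimplex_comp_barycentricPoint {n : ℕ} {f : ℝ → ℝ}
    (hf : Continuous f) (x : Fin (n + 1) → ℝ) :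
    IntegrableOn (fun t => f (barycentricPoint x t)) (cornerSimplex n) :=
  (hf.comp (continuous_barycentricPoint x)).continuousOn.integrableOn_compact
    (isCompact_cornerSimplex n)

lemma barycentricPoint_cons {n : ℕ} (x : Fin (n + 2) → ℝ) (s : ℝ) (u : Fin n → ℝ) :
    barycentricPoint x (Fin.cons s u)
      = (x 1 - x 0) * s + barycentricPoint (x ∘ (1 : Fin (n + 2)).succAbove) u := by
  simp only [barycentricPoint, Fin.sum_univ_succ (n := n), Fin.cons_zero, Fin.cons_succ,
    Function.comp_apply, Fin.one_succAbove_zero, Fin.one_succAbove_succ, Fin.succ_zero_eq_one]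
  ring

lemma barycentricPoint_comp_succ {n : ℕ} (x : Fin (n + 2) → ℝ) (u : Fin n → ℝ) :
    barycentricPoint (x ∘ Fin.succ) u
      = (x 1 - x 0) * (1 - ∑ i, u i)
        + barycentricPoint (x ∘ (1 : Fin (n + 2)).succAbove) u := by
  simp only [barycentricPoint, Function.comp_apply, Fin.one_succAbove_zero,
    Fin.one_succAbove_succ, Fin.succ_zero_eq_one]
  ring

theorem divDiff_eq_setIntegral_iteratedDeriv {n : ℕ} {g : ℝ → ℝ} (hg : ContDiff ℝ n g)
    {x : Fin (n + 1) → ℝ} (hx : Function.Injective x) :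
    divDiff univ x g = ∫ t in cornerSimplex n, iteratedDeriv n g (barycentricPoint x t) := by
  induction n with
  | zero => simp [divDiff, barycentricPoint, cornerSimplex, measureReal_def, volume_pi]
  | succ n ih =>
    have hgn : ContDiff ℝ n g := hg.of_le (by norm_cast; omega)
    have hd : x 1 - x 0 ≠ 0 := sub_ne_zero.2 (hx.ne Fin.zero_ne_one.symm)
    have hderiv : Continuous (deriv (iteratedDeriv n g)) := by
      rw [← iteratedDeriv_succ]
      exact hg.continuous_iteratedDeriv' (n + 1)
    have hint {m : ℕ} (y : Fin (m + 1) → ℝ) :=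
      integrableOn_cornerSimplex_comp_barycentricPoint (hgn.continuous_iteratedDeriv' n) y
    rw [divDiff_univ_fin_succ hx, ih hgn (hx.comp (Fin.succ_injective _)),
      ih hgn (hx.comp Fin.succAbove_right_injective), ← integral_sub (hint _) (hint _),
      ← integral_div, setIntegral_cornerSimplex_succ
        (integrableOn_cornerSimplex_comp_barycentricPoint (hg.continuous_iteratedDeriv' _) x)]
    refine setIntegral_congr_fun (measurableSet_cornerSimplex n) fun u hu => ?_
    rw [integral_Icc_eq_integral_Ioc, ← intervalIntegral.integral_of_le (by linarith [hu.2])]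
    simp only [barycentricPoint_cons, iteratedDeriv_succ]
    rw [intervalIntegral_deriv_comp_mul_add (hg.differentiable_iteratedDeriv' n) hderiv hd,
      barycentricPoint_comp_succ]

end HermiteGenocchi

/-- Hermite–Genocchi formula: for an `n`-times continuously differentiable function `g`
and `n+1` distinct points `x_0,…,x_n`, the divided difference
`∑_j g(x_j)/∏_{i≠j}(x_j − x_i)` equals the integral of `g^{(n)}` evaluated at convex
combinations of the points, over the probability simplex. -/
theorem stmt7 {n : ℕ} (g : ℝ → ℝ) (hg : ContDiff ℝ n g)
    (x : Fin (n + 1) → ℝ) (hx : Function.Injective x) :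
    ∑ j, g (x j) / ∏ i ∈ Finset.univ.erase j, (x j - x i)
      = ∫ t in {t : Fin n → ℝ | (∀ i, 0 ≤ t i) ∧ ∑ i, t i ≤ 1},
          iteratedDeriv n g ((1 - ∑ i, t i) * x 0 + ∑ i, t i * x i.succ) :=
  HermiteGenocchi.divDiff_eq_setIntegral_iteratedDeriv hg hx
end
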